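/- arXiv:2003.10362 — 7 statements merged into one kernel-verified Lean document; each statement's English description precedes it below -/
import Mathlib

section
/- Let A_m, A_h, γ, u_max > 0 and 0 < x̄1 < 1, 0 < x̄2 < 1. If x̄1 < A_m·x̄2/(A_m·x̄2 + u_max) and x̄2 < A_h·x̄1/(A_h·x̄1 + γ), then both A_h(A_m + u_max)·x̄1 + γ·u_max ≤ A_m·A_h and A_m(A_h + γ)·x̄2 + γ·u_max ≤ A_m·A_h. -/
theorem lemma3_admissible (Am Ah γ umax x1b x2b : ℝ)
    (hAm : 0 < Am) (hAh : 0 < Ah) (hγ : 0 < γ) (humax : 0 < umax)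
    (hx1 : 0 < x1b) (hx1' : x1b < 1) (hx2 : 0 < x2b) (hx2' : x2b < 1)
    (h1 : x1b < Am * x2b / (Am * x2b + umax))
    (h2 : x2b < Ah * x1b / (Ah * x1b + γ)) :
    Ah * (Am + umax) * x1b + γ * umax ≤ Am * Ah ∧
      Am * (Ah + γ) * x2b + γ * umax ≤ Am * Ah := by
  have hd1 : 0 < Am * x2b + umax := by positivity
  have hd2 : 0 < Ah * x1b + γ := by positivity
  have h1' : x1b * (Am * x2b + umax) < Am * x2b := (lt_div_iff₀ hd1).mp h1
  have h2' : x2b * (Ah * x1b + γ) < Ah * x1b := (lt_div_iff₀ hd2).mp h2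
  constructor
  · nlinarith [mul_pos hx1 hx2, mul_nonneg hAh.le hx1.le, mul_nonneg hAm.le hx2.le,
      mul_lt_mul_of_pos_left h2' hAm, mul_lt_mul_of_pos_left h1' hAh]
  · nlinarith [mul_pos hx1 hx2, mul_nonneg hAh.le hx1.le, mul_nonneg hAm.le hx2.le,
      mul_lt_mul_of_pos_left h2' hAm, mul_lt_mul_of_pos_left h1' hAh]
end

section
/- Let A_m, A_h, γ, u_min > 0 and 0 < x̄1 < 1, 0 < x̄2 < 1. If x̄1 < A_m·x̄2/(A_m·x̄2 + u_min) and x̄2 < A_h·x̄1/(A_h·x̄1 + γ), then both A_h(A_m + u_min)·x̄1 + γ·u_min ≤ A_m·A_h and A_m(A_h + γ)·x̄2 + γ·u_min ≤ A_m·A_h. -/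
theorem lemma3_MRPI (Am Ah γ umin x1b x2b : ℝ)
    (hAm : 0 < Am) (hAh : 0 < Ah) (hγ : 0 < γ) (humin : 0 < umin)
    (hx1 : 0 < x1b) (hx1' : x1b < 1) (hx2 : 0 < x2b) (hx2' : x2b < 1)
    (h1 : x1b < Am * x2b / (Am * x2b + umin))
    (h2 : x2b < Ah * x1b / (Ah * x1b + γ)) :
    Ah * (Am + umin) * x1b + γ * umin ≤ Am * Ah ∧
      Am * (Ah + γ) * x2b + γ * umin ≤ Am * Ah := by
  have d1 : 0 < Am * x2b + umin := by positivity
  have d2 : 0 < Ah * x1b + γ := by positivity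
  have h1' : x1b * (Am * x2b + umin) < Am * x2b :=
    (lt_div_iff₀ d1).mp h1
  have h2' : x2b * (Ah * x1b + γ) < Ah * x1b :=
    (lt_div_iff₀ d2).mp h2
  have k1 : umin * x1b < Am * x2b * (1 - x1b) := by nlinarith
  have k2 : γ * x2b < Ah * x1b * (1 - x2b) := by nlinarith
  have kk : γ * umin ≤ Am * Ah * (1 - x1b) * (1 - x2b) := by
    nlinarith [mul_pos hx1 hx2, mul_lt_mul_of_pos_right k1 (mul_pos hγ hx2), mul_lt_mul_of_pos_right k2 (mul_pos humin hx1)]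
  constructor
  · nlinarith [mul_lt_mul_of_pos_left k1 hAh]
  · nlinarith [mul_lt_mul_of_pos_left k2 hAm]
end

section
/- Let A_m, A_h, γ, u_max > 0 and 0 < x̄1 < 1, 0 < x̄2 < 1. Assume A_m(A_h + γ)·x̄2 + γ·u_max ≤ A_m·A_h (condition (16) fails), x̄1 < A_m·x̄2/(A_m·x̄2 + u_max) (condition (11) holds), and x̄2 ≥ A_h·x̄1/(A_h·x̄1 + γ) (condition (13) fails). Then A_h(A_m + u_max)·x̄1 + γ·u_max ≤ A_m·A_h (condition (14) fails). -/
theorem lemma4_core (Am Ah γ umax x1b x2b : ℝ)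
    (hAm : 0 < Am) (hAh : 0 < Ah) (hγ : 0 < γ) (humax : 0 < umax)
    (hx1 : 0 < x1b) (hx1' : x1b < 1) (hx2 : 0 < x2b) (hx2' : x2b < 1)
    (h16 : Am * (Ah + γ) * x2b + γ * umax ≤ Am * Ah)
    (h11 : x1b < Am * x2b / (Am * x2b + umax))
    (h13 : x2b ≥ Ah * x1b / (Ah * x1b + γ)) :
    Ah * (Am + umax) * x1b + γ * umax ≤ Am * Ah := by
  have hd1 : 0 < Am * x2b + umax := by positivity
  have hd2 : 0 < Ah * x1b + γ := by positivity
  have h11' : x1b * (Am * x2b + umax) < Am * x2b := by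
    rw [lt_div_iff₀ hd1] at h11
    linarith
  have h13' : Ah * x1b ≤ x2b * (Ah * x1b + γ) := by
    rw [ge_iff_le, div_le_iff₀ hd2] at h13
    linarith
  nlinarith [mul_pos hAh humax, mul_pos hγ humax, sq_nonneg (x1b - x2b),
    mul_le_mul_of_nonneg_left h13' (le_of_lt hAh),
    mul_lt_mul_of_pos_left h11' hAh, mul_lt_mul_of_pos_left h11' hγ,
    mul_pos hx1 hx2, sq_nonneg (Am*x2b - Ah*x1b)]
end

section
/- Let A_m, A_h, γ, u > 0 and 0 < x̄1 < 1, 0 < x̄2 < 1. If x̄2 ≥ A_h·x̄1/(A_h·x̄1 + γ) and A_m(A_h + γ)·x̄2 + γ·u ≤ A_m·A_h, then A_h(A_m + u)·x̄1 + γ·u ≤ A_m·A_h. -/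
theorem lemma4_implication (Am Ah γ u x1b x2b : ℝ)
    (hAm : 0 < Am) (hAh : 0 < Ah) (hγ : 0 < γ) (hu : 0 < u)
    (hx1 : 0 < x1b) (hx1' : x1b < 1) (hx2 : 0 < x2b) (hx2' : x2b < 1)
    (h1 : x2b ≥ Ah * x1b / (Ah * x1b + γ))
    (h2 : Am * (Ah + γ) * x2b + γ * u ≤ Am * Ah) :
    Ah * (Am + u) * x1b + γ * u ≤ Am * Ah := by
  have hD : 0 < Ah * x1b + γ := by positivity
  have h1' : Ah * x1b ≤ x2b * (Ah * x1b + γ) := by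
    have := (div_le_iff₀ hD).mp h1
    linarith
  nlinarith [mul_pos hAm (mul_pos hAh hx1), mul_pos hγ hu,
    mul_le_mul_of_nonneg_left h1' (le_of_lt (mul_pos hAm (by linarith : (0:ℝ) < Ah + γ))),
    mul_le_mul_of_nonneg_left h2 hD.le]
end

section
/- Let A_m, A_h, γ, u > 0 and 0 < x̄1 < 1, 0 < x̄2 < 1. If x̄1 ≥ A_m·x̄2/(A_m·x̄2 + u) and A_h(A_m + u)·x̄1 + γ·u ≤ A_m·A_h, then A_m(A_h + γ)·x̄2 + γ·u ≤ A_m·A_h. -/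
theorem lemma4_implication_symm (Am Ah γ u x1b x2b : ℝ)
    (hAm : 0 < Am) (hAh : 0 < Ah) (hγ : 0 < γ) (hu : 0 < u)
    (hx1 : 0 < x1b) (hx1' : x1b < 1) (hx2 : 0 < x2b) (hx2' : x2b < 1)
    (h1 : x1b ≥ Am * x2b / (Am * x2b + u))
    (h2 : Ah * (Am + u) * x1b + γ * u ≤ Am * Ah) :
    Am * (Ah + γ) * x2b + γ * u ≤ Am * Ah := by
  have hd : 0 < Am * x2b + u := by positivity
  have h1' : Am * x2b ≤ x1b * (Am * x2b + u) := by
    rw [ge_iff_le, div_le_iff₀ hd] at h1; exact h1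
  nlinarith [mul_pos hAh (mul_pos hAm hx2), mul_pos hγ hu,
    mul_le_mul_of_nonneg_left h1' (le_of_lt (mul_pos hAh (by linarith : (0:ℝ) < Am + u))),
    mul_le_mul_of_nonneg_right h2 hd.le]
end

section
/- Let A_m, A_h, γ, u_max > 0 and 0 < x̄1 < 1, 0 < x̄2 < 1. It is impossible that simultaneously: x̄2 < A_h·x̄1/(A_h·x̄1 + γ), A_m(A_h + γ)·x̄2 + γ·u_max > A_m·A_h, x̄1 < A_m·x̄2/(A_m·x̄2 + u_max), and A_h(A_m + u_max)·x̄1 + γ·u_max > A_m·A_h. -/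
theorem viable_subcases_exclusive (Am Ah γ umax x1b x2b : ℝ)
    (hAm : 0 < Am) (hAh : 0 < Ah) (hγ : 0 < γ) (humax : 0 < umax)
    (hx1 : 0 < x1b) (hx1' : x1b < 1) (hx2 : 0 < x2b) (hx2' : x2b < 1) :
    ¬ (x2b < Ah * x1b / (Ah * x1b + γ) ∧
        Am * (Ah + γ) * x2b + γ * umax > Am * Ah ∧
        x1b < Am * x2b / (Am * x2b + umax) ∧
        Ah * (Am + umax) * x1b + γ * umax > Am * Ah) := by
  rintro ⟨h1, h2, h3, h4⟩
  have d1 : 0 < Ah * x1b + γ := by positivity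
  have d2 : 0 < Am * x2b + umax := by positivity
  rw [lt_div_iff₀ d1] at h1
  rw [lt_div_iff₀ d2] at h3
  nlinarith [mul_pos hx1 hx2, mul_pos hγ humax, mul_pos hAm hAh,
    mul_pos (mul_pos hAh hx1) hx2, mul_pos (mul_pos hAm hx1) hx2]
end

section
/- Let A_m, A_h, γ > 0 and 0 < u_min. If x̄1 ≥ A_m·x̄2/(A_m·x̄2 + u_min) and x̄2 ≥ A_h·x̄1/(A_h·x̄1 + γ) with 0 < x̄1 ≤ 1, 0 < x̄2 ≤ 1, then for every x = (x1, x2) with 0 ≤ x1 ≤ x̄1, 0 ≤ x2 ≤ x̄2 and every u ≥ u_min: (a) if x1 = x̄1 then A_m x2(1 - x̄1) - u·x̄1 ≤ 0, and (b) if x2 = x̄2 then A_h x1(1 - x̄2) - γ·x̄2 ≤ 0. -/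
theorem comfortable_case_invariance (Am Ah γ umin x1b x2b : ℝ)
    (hAm : 0 < Am) (hAh : 0 < Ah) (hγ : 0 < γ) (humin : 0 < umin)
    (h1 : x1b ≥ Am * x2b / (Am * x2b + umin))
    (h2 : x2b ≥ Ah * x1b / (Ah * x1b + γ))
    (hx1 : 0 < x1b) (hx1' : x1b ≤ 1) (hx2 : 0 < x2b) (hx2' : x2b ≤ 1) :
    ∀ x1 x2 u : ℝ, 0 ≤ x1 → x1 ≤ x1b → 0 ≤ x2 → x2 ≤ x2b → umin ≤ u →
      (x1 = x1b → Am * x2 * (1 - x1b) - u * x1b ≤ 0) ∧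
      (x2 = x2b → Ah * x1 * (1 - x2b) - γ * x2b ≤ 0) := by
  intro x1 x2 u hx10 hx1le hx20 hx2le hu
  have hd1 : 0 < Am * x2b + umin := by positivity
  have hd2 : 0 < Ah * x1b + γ := by positivity
  have k1 : Am * x2b ≤ x1b * (Am * x2b + umin) :=
    (div_le_iff₀ hd1).mp h1
  have k2 : Ah * x1b ≤ x2b * (Ah * x1b + γ) :=
    (div_le_iff₀ hd2).mp h2
  constructor
  · intro _
    nlinarith [mul_le_mul_of_nonneg_left hx2le hAm.le, mul_nonneg humin.le hx1.le]
  · intro _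
    nlinarith [mul_le_mul_of_nonneg_left hx1le hAh.le]
end
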